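/- Let φ : ℝ → M_n(ℝ) be an admissible kernel with φ̂₀ = ∫_ℝ φ_t dt of spectral radius strictly smaller than 1, and let Ψ = ∑_{k=1}^∞ φ^{⋆k} (the entrywise L¹ sum of convolution powers). Then for every z ∈ ℂ with Re z ≥ 0, the Laplace transforms satisfy Ψ̂_z = φ̂_z (I − φ̂_z)^{-1} and I + Ψ̂_z = (I − φ̂_z)^{-1}. -/

import Mathlib

open MeasureTheory
open scoped ENNReal

/-- Convolution of matrix-valued functions: `(A ⋆ B)_t = ∫ A_s B_{t-s} ds`, computed entrywise. -/
noncomputable def mconv {d : ℕ} (A B : ℝ → Matrix (Fin d) (Fin d) ℝ) :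
    ℝ → Matrix (Fin d) (Fin d) ℝ :=
  fun t => Matrix.of fun i j => ∫ s : ℝ, ∑ k, A s i k * B (t - s) k j

/-- `convPow φ k` is the `(k+1)`-fold convolution power `φ^{⋆(k+1)}`
(so `convPow φ 0 = φ^{⋆1} = φ`); as `k` ranges over `ℕ` this covers all `φ^{⋆k}`, `k ≥ 1`. -/
noncomputable def convPow {d : ℕ} (φ : ℝ → Matrix (Fin d) (Fin d) ℝ) :
    ℕ → ℝ → Matrix (Fin d) (Fin d) ℝ
  | 0 => φ
  | k + 1 => mconv φ (convPow φ k)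

/-! Causality makes `|e^{-zt}| ≤ 1` on the support of every kernel when `Re z ≥ 0`, so the Laplace
transform turns convolution into matrix multiplication (Fubini), and `φ^{⋆(k+1)}` has transform
`φ̂_z^{k+1}`. The nonnegative series `∑ φ^{⋆k}` is dominated by the integrable `Ψ`, so dominated
convergence gives `Ψ̂_z = ∑_{k ≥ 1} φ̂_z^k`, and this geometric series yields
`(I - φ̂_z)(I + Ψ̂_z) = I`. -/

open Convolution

theorem mul_eq_sub_of_hasSum_pow_succ {R : Type*} [Ring R] [TopologicalSpace R]
    [IsTopologicalRing R] [T2Space R] {A S : R} (h : HasSum (fun k : ℕ => A ^ (k + 1)) S) :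
    A * S = S - A := by
  have hshift : HasSum (fun k : ℕ => A ^ (k + 1 + 1)) (S - A) := by
    simpa using (hasSum_nat_add_iff' 1).mpr h
  exact (h.mul_left A).unique (by simpa only [← pow_succ'] using hshift)

theorem Matrix.inv_one_sub_eq_of_hasSum_pow_succ {n 𝕜 : Type*} [Fintype n] [DecidableEq n]
    [CommRing 𝕜] [TopologicalSpace 𝕜] [IsTopologicalRing 𝕜] [T2Space 𝕜] {A S : Matrix n n 𝕜}
    (h : HasSum (fun k : ℕ => A ^ (k + 1)) S) :
    (1 - A)⁻¹ = 1 + S := by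
  refine Matrix.inv_eq_right_inv ?_
  rw [sub_mul, one_mul, mul_add, mul_one, mul_eq_sub_of_hasSum_pow_succ h]
  abel

theorem Matrix.eq_mul_inv_one_sub_of_hasSum_pow_succ {n 𝕜 : Type*} [Fintype n] [DecidableEq n]
    [CommRing 𝕜] [TopologicalSpace 𝕜] [IsTopologicalRing 𝕜] [T2Space 𝕜] {A S : Matrix n n 𝕜}
    (h : HasSum (fun k : ℕ => A ^ (k + 1)) S) :
    S = A * (1 - A)⁻¹ := by
  rw [Matrix.inv_one_sub_eq_of_hasSum_pow_succ h, mul_add, mul_one,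
    mul_eq_sub_of_hasSum_pow_succ h]
  abel

theorem norm_cexp_neg_mul_le_one {z : ℂ} (hz : 0 ≤ z.re) {t : ℝ} (ht : 0 ≤ t) :
    ‖Complex.exp (-(z * t))‖ ≤ 1 := by
  rw [Complex.norm_exp, Real.exp_le_one_iff]
  simpa using mul_nonneg hz ht

theorem norm_cexp_neg_mul_mul_le {z : ℂ} (hz : 0 ≤ z.re) {f : ℝ → ℝ}
    (hf : ∀ᵐ t : ℝ, t < 0 → f t = 0) :
    ∀ᵐ t : ℝ, ‖Complex.exp (-(z * t)) * f t‖ ≤ ‖f t‖ := by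
  filter_upwards [hf] with t ht
  rcases lt_or_ge t 0 with hneg | hnonneg
  · simp [ht hneg]
  · rw [norm_mul, Complex.norm_real]
    exact mul_le_of_le_one_left (norm_nonneg _) (norm_cexp_neg_mul_le_one hz hnonneg)

theorem MeasureTheory.Integrable.cexp_neg_mul {z : ℂ} (hz : 0 ≤ z.re) {f : ℝ → ℝ}
    (hf : Integrable f) (hf0 : ∀ᵐ t : ℝ, t < 0 → f t = 0) :
    Integrable fun t : ℝ => Complex.exp (-(z * t)) * f t :=
  hf.norm.mono' (by fun_prop) (norm_cexp_neg_mul_mul_le hz hf0)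

noncomputable def laplace (z : ℂ) (f : ℝ → ℝ) : ℂ :=
  ∫ t : ℝ, Complex.exp (-(z * t)) * f t

noncomputable def mlaplace {d : ℕ} (z : ℂ) (A : ℝ → Matrix (Fin d) (Fin d) ℝ) :
    Matrix (Fin d) (Fin d) ℂ :=
  Matrix.of fun i j => laplace z fun t => A t i j

theorem cexp_neg_mul_convolution (z : ℂ) (f g : ℝ → ℝ) (t : ℝ) :
    Complex.exp (-(z * t)) * ((f ⋆[ContinuousLinearMap.mul ℝ ℝ] g) t : ℝ) =
      ((fun s : ℝ => Complex.exp (-(z * s)) * f s) ⋆[ContinuousLinearMap.mul ℂ ℂ]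
        (fun s : ℝ => Complex.exp (-(z * s)) * g s)) t := by
  have hexp : ∀ s : ℝ, Complex.exp (-(z * t)) =
      Complex.exp (-(z * s)) * Complex.exp (-(z * (t - s : ℝ))) := fun s => by
    rw [← Complex.exp_add]; push_cast; ring_nf
  simp only [convolution_def, ContinuousLinearMap.mul_apply']
  rw [← integral_complex_ofReal, ← integral_const_mul]
  refine integral_congr_ae (Filter.Eventually.of_forall fun s => ?_)
  simp only [hexp s]
  push_cast
  ring

theorem integrable_cexp_neg_mul_convolution {z : ℂ} (hz : 0 ≤ z.re) {f g : ℝ → ℝ}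
    (hf : Integrable f) (hf0 : ∀ᵐ t : ℝ, t < 0 → f t = 0)
    (hg : Integrable g) (hg0 : ∀ᵐ t : ℝ, t < 0 → g t = 0) :
    Integrable fun t : ℝ =>
      Complex.exp (-(z * t)) * ((f ⋆[ContinuousLinearMap.mul ℝ ℝ] g) t : ℝ) := by
  simp only [cexp_neg_mul_convolution]
  exact (hf.cexp_neg_mul hz hf0).integrable_convolution _ (hg.cexp_neg_mul hz hg0)

theorem laplace_convolution {z : ℂ} (hz : 0 ≤ z.re) {f g : ℝ → ℝ}
    (hf : Integrable f) (hf0 : ∀ᵐ t : ℝ, t < 0 → f t = 0)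
    (hg : Integrable g) (hg0 : ∀ᵐ t : ℝ, t < 0 → g t = 0) :
    laplace z (f ⋆[ContinuousLinearMap.mul ℝ ℝ] g) = laplace z f * laplace z g := by
  calc laplace z (f ⋆[ContinuousLinearMap.mul ℝ ℝ] g)
      = ∫ t, ((fun s : ℝ => Complex.exp (-(z * s)) * f s) ⋆[ContinuousLinearMap.mul ℂ ℂ]
          (fun s : ℝ => Complex.exp (-(z * s)) * g s)) t :=
        integral_congr_ae (.of_forall (cexp_neg_mul_convolution z f g))
    _ = laplace z f * laplace z g :=
        integral_convolution _ (hf.cexp_neg_mul hz hf0) (hg.cexp_neg_mul hz hg0)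

theorem mconv_apply_ae_eq_sum_convolution {d : ℕ} {A B : ℝ → Matrix (Fin d) (Fin d) ℝ}
    (hA : ∀ i j, Integrable fun t => A t i j) (hB : ∀ i j, Integrable fun t => B t i j)
    (i j : Fin d) :
    (fun t => mconv A B t i j) =ᵐ[volume]
      fun t => ∑ k, ((fun s => A s i k) ⋆[ContinuousLinearMap.mul ℝ ℝ] (fun s => B s k j)) t := by
  have hexists : ∀ᵐ t : ℝ, ∀ k, ConvolutionExistsAt (fun s => A s i k) (fun s => B s k j) t
      (ContinuousLinearMap.mul ℝ ℝ) :=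
    ae_all_iff.mpr fun k => (hA i k).ae_convolution_exists _ (hB k j)
  filter_upwards [hexists] with t ht
  exact integral_finsetSum _ fun k _ => ht k

structure IsCausalIntegrable {d : ℕ} (A : ℝ → Matrix (Fin d) (Fin d) ℝ) : Prop where
  integrable : ∀ i j, Integrable fun t => A t i j
  ae_eq_zero_of_neg : ∀ i j, ∀ᵐ t : ℝ, t < 0 → A t i j = 0

theorem IsCausalIntegrable.mconv {d : ℕ} {A B : ℝ → Matrix (Fin d) (Fin d) ℝ}
    (hA : IsCausalIntegrable A) (hB : IsCausalIntegrable B) :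
    IsCausalIntegrable (mconv A B) where
  integrable i j := (integrable_finsetSum _ fun k _ =>
      (hA.integrable i k).integrable_convolution _ (hB.integrable k j)).congr
    (mconv_apply_ae_eq_sum_convolution hA.integrable hB.integrable i j).symm
  ae_eq_zero_of_neg i j := .of_forall fun t ht => by
    have hA0 := ae_all_iff.mpr fun k => hA.ae_eq_zero_of_neg i k
    have hB0 := ae_all_iff.mpr fun k =>
      (Measure.measurePreserving_sub_left volume t).quasiMeasurePreserving.tendsto_ae.eventually
        (hB.ae_eq_zero_of_neg k j)
    refine integral_eq_zero_of_ae ?_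
    filter_upwards [hA0, hB0] with s hAs hBs
    refine Finset.sum_eq_zero fun k _ => ?_
    rcases lt_or_ge s 0 with hs | hs
    · rw [hAs k hs, zero_mul]
    · rw [hBs k (by linarith), mul_zero]

theorem mlaplace_mconv {d : ℕ} {A B : ℝ → Matrix (Fin d) (Fin d) ℝ} {z : ℂ} (hz : 0 ≤ z.re)
    (hA : IsCausalIntegrable A) (hB : IsCausalIntegrable B) :
    mlaplace z (mconv A B) = mlaplace z A * mlaplace z B := by
  have hconv := mconv_apply_ae_eq_sum_convolution hA.integrable hB.integrable
  ext i j
  rw [Matrix.mul_apply]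
  calc mlaplace z (mconv A B) i j
      = ∫ t : ℝ, ∑ k, Complex.exp (-(z * t)) *
          (((fun s => A s i k) ⋆[ContinuousLinearMap.mul ℝ ℝ] (fun s => B s k j)) t : ℝ) := by
        refine integral_congr_ae ((hconv i j).mono fun t ht => ?_)
        simp only [ht, Complex.ofReal_sum, Finset.mul_sum]
    _ = ∑ k, laplace z ((fun s => A s i k) ⋆[ContinuousLinearMap.mul ℝ ℝ] (fun s => B s k j)) :=
        integral_finsetSum _ fun k _ => integrable_cexp_neg_mul_convolution hz
          (hA.integrable i k) (hA.ae_eq_zero_of_neg i k)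
          (hB.integrable k j) (hB.ae_eq_zero_of_neg k j)
    _ = ∑ k, mlaplace z A i k * mlaplace z B k j := by
        refine Finset.sum_congr rfl fun k _ => ?_
        exact laplace_convolution hz (hA.integrable i k) (hA.ae_eq_zero_of_neg i k)
          (hB.integrable k j) (hB.ae_eq_zero_of_neg k j)

theorem hasSum_laplace {z : ℂ} (hz : 0 ≤ z.re) {f : ℕ → ℝ → ℝ} {g : ℝ → ℝ}
    (hf : ∀ k, AEStronglyMeasurable (f k)) (hf0 : ∀ k, ∀ᵐ t : ℝ, t < 0 → f k t = 0)
    (hnonneg : ∀ k t, 0 ≤ f k t) (hg : Integrable g)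
    (hfg : ∀ᵐ t : ℝ, HasSum (fun k => f k t) (g t)) :
    HasSum (fun k => laplace z (f k)) (laplace z g) :=
  hasSum_integral_of_dominated_convergence f (fun k => by fun_prop)
    (fun k => (norm_cexp_neg_mul_mul_le hz (hf0 k)).mono fun t ht =>
      ht.trans_eq (Real.norm_of_nonneg (hnonneg k t)))
    (hfg.mono fun t ht => ht.summable)
    (hg.congr (hfg.mono fun t ht => ht.tsum_eq.symm))
    (hfg.mono fun t ht => (Complex.hasSum_ofReal.mpr ht).mul_left _)

theorem hasSum_mlaplace {d : ℕ} {z : ℂ} (hz : 0 ≤ z.re) {A : ℕ → ℝ → Matrix (Fin d) (Fin d) ℝ}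
    {S : ℝ → Matrix (Fin d) (Fin d) ℝ} (hA : ∀ k, IsCausalIntegrable (A k))
    (hnonneg : ∀ k t i j, 0 ≤ A k t i j) (hS : ∀ i j, Integrable fun t => S t i j)
    (hAS : ∀ᵐ t : ℝ, ∀ i j, HasSum (fun k => A k t i j) (S t i j)) :
    HasSum (fun k => mlaplace z (A k)) (mlaplace z S) :=
  Pi.hasSum.mpr fun i => Pi.hasSum.mpr fun j =>
    hasSum_laplace hz (fun k => ((hA k).integrable i j).aestronglyMeasurable)
      (fun k => (hA k).ae_eq_zero_of_neg i j) (fun k t => hnonneg k t i j) (hS i j)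
      (hAS.mono fun _ ht => ht i j)

theorem IsCausalIntegrable.convPow {d : ℕ} {φ : ℝ → Matrix (Fin d) (Fin d) ℝ}
    (hφ : IsCausalIntegrable φ) : ∀ k, IsCausalIntegrable (convPow φ k)
  | 0 => hφ
  | k + 1 => hφ.mconv (hφ.convPow k)

theorem convPow_nonneg {d : ℕ} {φ : ℝ → Matrix (Fin d) (Fin d) ℝ} (hφ : ∀ t i j, 0 ≤ φ t i j) :
    ∀ k t i j, 0 ≤ convPow φ k t i j
  | 0 => hφ
  | k + 1 => fun t i j => integral_nonneg fun s =>
      Finset.sum_nonneg fun l _ => mul_nonneg (hφ s i l) (convPow_nonneg hφ k (t - s) l j)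

theorem mlaplace_convPow {d : ℕ} {z : ℂ} (hz : 0 ≤ z.re) {φ : ℝ → Matrix (Fin d) (Fin d) ℝ}
    (hφ : IsCausalIntegrable φ) : ∀ k, mlaplace z (convPow φ k) = mlaplace z φ ^ (k + 1)
  | 0 => (pow_one _).symm
  | k + 1 => by
    rw [convPow, mlaplace_mconv hz hφ (hφ.convPow k), mlaplace_convPow hz hφ k, ← pow_succ']

theorem stmt_9_general {d : ℕ} (φ : ℝ → Matrix (Fin d) (Fin d) ℝ)
    (hpos : ∀ t i j, 0 ≤ φ t i j)
    (hint : ∀ i j, Integrable fun t => φ t i j)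
    (hcausal : ∀ t < (0 : ℝ), φ t = 0)
    (Ψ : ℝ → Matrix (Fin d) (Fin d) ℝ)
    (hΨint : ∀ i j, Integrable fun t => Ψ t i j)
    (hΨ : ∀ᵐ t : ℝ, ∀ i j, HasSum (fun k : ℕ => convPow φ k t i j) (Ψ t i j)) :
    ∀ z : ℂ, 0 ≤ z.re →
      (Matrix.of fun i j => ∫ t : ℝ, Complex.exp (-(z * t)) * ((Ψ t i j : ℝ) : ℂ)) =
        (Matrix.of fun i j => ∫ t : ℝ, Complex.exp (-(z * t)) * ((φ t i j : ℝ) : ℂ)) *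
        (1 - Matrix.of fun i j => ∫ t : ℝ, Complex.exp (-(z * t)) * ((φ t i j : ℝ) : ℂ))⁻¹ ∧
      1 + (Matrix.of fun i j => ∫ t : ℝ, Complex.exp (-(z * t)) * ((Ψ t i j : ℝ) : ℂ)) =
        (1 - Matrix.of fun i j => ∫ t : ℝ, Complex.exp (-(z * t)) * ((φ t i j : ℝ) : ℂ))⁻¹ := by
  intro z hz
  have hφ : IsCausalIntegrable φ :=
    ⟨hint, fun i j => .of_forall fun t ht => by simp [hcausal t ht]⟩
  have hsum : HasSum (fun k : ℕ => mlaplace z φ ^ (k + 1)) (mlaplace z Ψ) := by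
    simpa only [mlaplace_convPow hz hφ] using
      hasSum_mlaplace hz hφ.convPow (convPow_nonneg hpos) hΨint hΨ
  exact ⟨Matrix.eq_mul_inv_one_sub_of_hasSum_pow_succ hsum,
    (Matrix.inv_one_sub_eq_of_hasSum_pow_succ hsum).symm⟩

/-- For an admissible kernel `φ` with `φ̂₀ = ∫ φ` of spectral radius `< 1` and
`Ψ = ∑_{k ≥ 1} φ^{⋆k}` (entrywise `L¹`/a.e. sum), the Laplace transforms satisfy
`Ψ̂_z = φ̂_z (I - φ̂_z)⁻¹` and `I + Ψ̂_z = (I - φ̂_z)⁻¹` for every `z` with `Re z ≥ 0`. -/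
theorem stmt_9 {d : ℕ} (φ : ℝ → Matrix (Fin d) (Fin d) ℝ)
    (hmeas : ∀ i j, Measurable fun t => φ t i j)
    (hpos : ∀ t i j, 0 ≤ φ t i j)
    (hint : ∀ i j, Integrable fun t => φ t i j)
    (hcausal : ∀ t < (0 : ℝ), φ t = 0)
    (hρ : spectralRadius ℂ
      ((Matrix.of fun i j => ∫ t : ℝ, φ t i j).map Complex.ofReal) < 1)
    (Ψ : ℝ → Matrix (Fin d) (Fin d) ℝ)
    (hΨint : ∀ i j, Integrable fun t => Ψ t i j)
    (hΨ : ∀ᵐ t : ℝ, ∀ i j, HasSum (fun k : ℕ => convPow φ k t i j) (Ψ t i j)) :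
    ∀ z : ℂ, 0 ≤ z.re →
      (Matrix.of fun i j => ∫ t : ℝ, Complex.exp (-(z * t)) * ((Ψ t i j : ℝ) : ℂ)) =
        (Matrix.of fun i j => ∫ t : ℝ, Complex.exp (-(z * t)) * ((φ t i j : ℝ) : ℂ)) *
        (1 - Matrix.of fun i j => ∫ t : ℝ, Complex.exp (-(z * t)) * ((φ t i j : ℝ) : ℂ))⁻¹ ∧
      1 + (Matrix.of fun i j => ∫ t : ℝ, Complex.exp (-(z * t)) * ((Ψ t i j : ℝ) : ℂ)) =
        (1 - Matrix.of fun i j => ∫ t : ℝ, Complex.exp (-(z * t)) * ((φ t i j : ℝ) : ℂ))⁻¹ :=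
  stmt_9_general φ hpos hint hcausal Ψ hΨint hΨ
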